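/- arXiv:1506.08678 — 2 statements merged into one kernel-verified Lean document; each statement's English description precedes it below -/
import Mathlib

section
/- Let E be a real inner product space, let γ, Ra > 0, let w : ℝ → E be differentiable, let f : ℝ → E, and let g : ℝ → ℝ be such that γ w'(t) + w(t) = Ra f(t) and ‖f(t)‖ ≤ g(t) for all t. Then the function t ↦ ‖w(t)‖² is differentiable and satisfies, for all t, (d/dt) ‖w(t)‖² + (1/γ) ‖w(t)‖² ≤ (Ra²/γ) g(t)². -/
open RealInnerProductSpace

lemma darcy_hasDerivAt {E : Type*} [NormedAddCommGroup E] [InnerProductSpace ℝ E]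
    (w : ℝ → E) (hw : Differentiable ℝ w) (t : ℝ) :
    HasDerivAt (fun s => ‖w s‖ ^ 2) (2 * ⟪deriv w t, w t⟫) t := by
  have h := (hw t).hasDerivAt
  have h2 : HasDerivAt (fun s => ⟪w s, w s⟫)
      (⟪w t, deriv w t⟫ + ⟪deriv w t, w t⟫) t := h.inner ℝ h
  have : (fun s => ⟪w s, w s⟫) = fun s => ‖w s‖ ^ 2 := by
    funext s
    rw [real_inner_self_eq_norm_sq]
  rw [this] at h2
  convert h2 using 1
  rw [real_inner_comm (w t) (deriv w t)]
  ring

/-- Energy estimate for the Darcy (momentum) equation of the difference `w = u − v`: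
if `γ w' + w = Ra f` with `‖f(t)‖ ≤ g(t)`, then `t ↦ ‖w(t)‖²` is differentiable and
`(d/dt)‖w‖² + (1/γ)‖w‖² ≤ (Ra²/γ) g²`. -/
theorem darcy_energy_estimate {E : Type*} [NormedAddCommGroup E] [InnerProductSpace ℝ E]
    (γ Ra : ℝ) (hγ : 0 < γ) (hRa : 0 < Ra)
    (w f : ℝ → E) (g : ℝ → ℝ) (hw : Differentiable ℝ w)
    (heq : ∀ t, γ • deriv w t + w t = Ra • f t)
    (hfg : ∀ t, ‖f t‖ ≤ g t) :
    Differentiable ℝ (fun t => ‖w t‖ ^ 2) ∧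
      ∀ t, deriv (fun s => ‖w s‖ ^ 2) t + (1 / γ) * ‖w t‖ ^ 2 ≤ Ra ^ 2 / γ * g t ^ 2 := by
  constructor
  · intro t
    exact (darcy_hasDerivAt w hw t).differentiableAt
  · intro t
    rw [(darcy_hasDerivAt w hw t).deriv]
    have hinner : γ * ⟪deriv w t, w t⟫ + ‖w t‖ ^ 2 = Ra * ⟪f t, w t⟫ := by
      have := congrArg (fun x => ⟪x, w t⟫) (heq t)
      simpa [inner_add_left, real_inner_smul_left, real_inner_self_eq_norm_sq] using this
    have hcs : ⟪f t, w t⟫ ≤ ‖f t‖ * ‖w t‖ := real_inner_le_norm _ _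
    have hg : ‖f t‖ ≤ g t := hfg t
    have hf0 : (0:ℝ) ≤ ‖f t‖ := norm_nonneg _
    have hw0 : (0:ℝ) ≤ ‖w t‖ := norm_nonneg _
    have key : Ra * ⟪f t, w t⟫ ≤ Ra * (g t * ‖w t‖) := by
      apply mul_le_mul_of_nonneg_left _ hRa.le
      exact hcs.trans (mul_le_mul_of_nonneg_right hg hw0)
    have young : 2 * Ra * (g t * ‖w t‖) ≤ Ra ^ 2 * g t ^ 2 + ‖w t‖ ^ 2 := by
      nlinarith [sq_nonneg (Ra * g t - ‖w t‖)]
    have main : γ * (2 * ⟪deriv w t, w t⟫) + ‖w t‖ ^ 2 ≤ Ra ^ 2 * g t ^ 2 := by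
      nlinarith [hinner, key, young]
    calc 2 * ⟪deriv w t, w t⟫ + 1 / γ * ‖w t‖ ^ 2
        = (γ * (2 * ⟪deriv w t, w t⟫) + ‖w t‖ ^ 2) / γ := by field_simp
      _ ≤ (Ra ^ 2 * g t ^ 2) / γ := by exact div_le_div_of_nonneg_right main hγ.le |>.trans_eq rfl
      _ = Ra ^ 2 / γ * g t ^ 2 := by ring
end

section
/- Let a, b, d, e > 0 and t₀ ∈ ℝ. Let X, Y : ℝ → ℝ be differentiable functions with X(t) ≥ 0 and Y(t) ≥ 0 for all t ≥ t₀, satisfying X'(t) + a X(t) ≤ b Y(t) and Y'(t) + d Y(t) ≤ e X(t) for all t ≥ t₀. Set α := min{ a, 2d − 2(b² + e²)/a }. Then for all t ≥ t₀, X(t)² + Y(t)² ≤ (X(t₀)² + Y(t₀)²) e^{−α (t − t₀)}. -/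
/-!
Along the trajectory, the energy `E = X² + Y²` satisfies
`E' ≤ -2aX² + 2(b + e)XY - 2dY²`. Young's inequality `2bXY ≤ (a/2)X² + (2b²/a)Y²`, and the same
with `e`, absorbs the cross term, leaving `E' ≤ -aX² - (2d - 2(b² + e²)/a)Y² ≤ -αE`; Grönwall's
inequality then gives `E(t) ≤ E(t₀) e^{-α(t - t₀)}`.
-/

open Real Set

theorem le_mul_exp_of_hasDerivAt_le_mul {E E' : ℝ → ℝ} {K t₀ : ℝ}
    (hE : ∀ t ≥ t₀, HasDerivAt E (E' t) t) (hbound : ∀ t ≥ t₀, E' t ≤ K * E t) :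
    ∀ t ≥ t₀, E t ≤ E t₀ * exp (K * (t - t₀)) := by
  intro t ht
  have hcont : ContinuousOn E (Icc t₀ t) := fun s hs => (hE s hs.1).continuousAt.continuousWithinAt
  have := le_gronwallBound_of_liminf_deriv_right_le (K := K) (ε := 0) hcont
    (fun s hs _ hr => (hE s hs.1).hasDerivWithinAt.liminf_right_slope_le hr) le_rfl
    (fun s hs => by simpa using hbound s hs.1) t ⟨ht, le_rfl⟩
  rwa [gronwallBound_ε0] at this

theorem two_mul_mul_le_of_pos {a : ℝ} (ha : 0 < a) (b x y : ℝ) :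
    2 * b * x * y ≤ a / 2 * x ^ 2 + 2 * b ^ 2 / a * y ^ 2 := by
  have hdiff : a / 2 * x ^ 2 + 2 * b ^ 2 / a * y ^ 2 - 2 * b * x * y =
      (a * x - 2 * b * y) ^ 2 / (2 * a) := by
    field_simp
    ring
  have : 0 ≤ (a * x - 2 * b * y) ^ 2 / (2 * a) := by positivity
  linarith

theorem min_mul_add_le (p q : ℝ) {u v : ℝ} (hu : 0 ≤ u) (hv : 0 ≤ v) :
    min p q * (u + v) ≤ p * u + q * v := by
  nlinarith [mul_le_mul_of_nonneg_right (min_le_left p q) hu,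
    mul_le_mul_of_nonneg_right (min_le_right p q) hv]

theorem energy_rate_le {a b d e x y x' y' : ℝ} (ha : 0 < a) (hx : 0 ≤ x) (hy : 0 ≤ y)
    (hx' : x' + a * x ≤ b * y) (hy' : y' + d * y ≤ e * x) :
    2 * x * x' + 2 * y * y' ≤ -(a * x ^ 2 + (2 * d - 2 * (b ^ 2 + e ^ 2) / a) * y ^ 2) := by
  have hX : x * x' ≤ x * (b * y - a * x) := mul_le_mul_of_nonneg_left (by linarith) hx
  have hY : y * y' ≤ y * (e * x - d * y) := mul_le_mul_of_nonneg_left (by linarith) hy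
  have hsplit : 2 * (b ^ 2 + e ^ 2) / a = 2 * b ^ 2 / a + 2 * e ^ 2 / a := by ring
  rw [hsplit]
  linarith [two_mul_mul_le_of_pos ha b x y, two_mul_mul_le_of_pos ha e x y]

theorem coupled_gronwall_general (a b d e t₀ : ℝ)
    (ha : 0 < a)
    (X Y : ℝ → ℝ) (hX : Differentiable ℝ X) (hY : Differentiable ℝ Y)
    (hX0 : ∀ t ≥ t₀, 0 ≤ X t) (hY0 : ∀ t ≥ t₀, 0 ≤ Y t)
    (hXineq : ∀ t ≥ t₀, deriv X t + a * X t ≤ b * Y t)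
    (hYineq : ∀ t ≥ t₀, deriv Y t + d * Y t ≤ e * X t) :
    ∀ t ≥ t₀, X t ^ 2 + Y t ^ 2 ≤ (X t₀ ^ 2 + Y t₀ ^ 2) *
      Real.exp (-(min a (2 * d - 2 * (b ^ 2 + e ^ 2) / a)) * (t - t₀)) := by
  refine le_mul_exp_of_hasDerivAt_le_mul (E := fun s => X s ^ 2 + Y s ^ 2)
    (E' := fun s => 2 * X s * deriv X s + 2 * Y s * deriv Y s) (fun s _ => ?_) (fun s hs => ?_)
  · exact (((hX s).hasDerivAt.fun_pow 2).fun_add ((hY s).hasDerivAt.fun_pow 2)).congr_deriv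
      (by norm_num)
  · calc 2 * X s * deriv X s + 2 * Y s * deriv Y s
        ≤ -(a * X s ^ 2 + (2 * d - 2 * (b ^ 2 + e ^ 2) / a) * Y s ^ 2) :=
          energy_rate_le ha (hX0 s hs) (hY0 s hs) (hXineq s hs) (hYineq s hs)
      _ ≤ -min a (2 * d - 2 * (b ^ 2 + e ^ 2) / a) * (X s ^ 2 + Y s ^ 2) := by
          linarith [min_mul_add_le a (2 * d - 2 * (b ^ 2 + e ^ 2) / a) (sq_nonneg (X s))
            (sq_nonneg (Y s))]

/-- Coupled differential inequality lemma encoding the fourth-power energy argument in the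
finite Darcy–Prandtl number case: if `X' + aX ≤ bY` and `Y' + dY ≤ eX` on `[t₀, ∞)` with
`X, Y ≥ 0` there, then with `α = min{a, 2d − 2(b² + e²)/a}` one has
`X(t)² + Y(t)² ≤ (X(t₀)² + Y(t₀)²) e^{−α(t − t₀)}` for all `t ≥ t₀`. -/
theorem coupled_gronwall (a b d e t₀ : ℝ)
    (ha : 0 < a) (hb : 0 < b) (hd : 0 < d) (he : 0 < e)
    (X Y : ℝ → ℝ) (hX : Differentiable ℝ X) (hY : Differentiable ℝ Y)
    (hX0 : ∀ t ≥ t₀, 0 ≤ X t) (hY0 : ∀ t ≥ t₀, 0 ≤ Y t)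
    (hXineq : ∀ t ≥ t₀, deriv X t + a * X t ≤ b * Y t)
    (hYineq : ∀ t ≥ t₀, deriv Y t + d * Y t ≤ e * X t) :
    ∀ t ≥ t₀, X t ^ 2 + Y t ^ 2 ≤ (X t₀ ^ 2 + Y t₀ ^ 2) *
      Real.exp (-(min a (2 * d - 2 * (b ^ 2 + e ^ 2) / a)) * (t - t₀)) :=
  coupled_gronwall_general a b d e t₀ ha X Y hX hY hX0 hY0 hXineq hYineq
end
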